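/- Let a, b, c ∈ {1,…,N} be pairwise distinct with a ≤ n, c ≤ n and b > n (i.e. p(a)=p(c)=0, p(b)=1), and let λ_a, λ_b, λ_c ∈ ℂ be pairwise distinct. Then −[E_{ab}E_{ba}/(λ_a−λ_b), E_{bc}E_{cb}/(λ_b−λ_c)] + [E_{ac}E_{ca}/(λ_a−λ_c), E_{bc}E_{cb}/(λ_b−λ_c)] + [E_{ac}E_{ca}/(λ_a−λ_c), E_{ba}E_{ab}/(λ_b−λ_a)] = 0. -/
import Mathlib


open Finset

namespace Glnm

/-- Parity: `p(a) = 0` for bosonic indices (`a ≤ n` in 1-based terms, i.e. `a.val < n`),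
`p(a) = 1` for fermionic ones. -/
def par (n N : ℕ) (a : Fin N) : ℕ := if (a : ℕ) < n then 0 else 1

/-- The Koszul-sign realization `e^{(j)}_{ab} = σ^{p(a)+p(b)} ⊗ ⋯ ⊗ σ^{p(a)+p(b)} ⊗ e_{ab} ⊗ I ⊗ ⋯ ⊗ I`
on `(ℂ^N)^{⊗k}`, realized as matrices indexed by tuples `Fin k → Fin N`. -/
noncomputable def eop (n N k : ℕ) (j : Fin k) (a b : Fin N) :
    Matrix (Fin k → Fin N) (Fin k → Fin N) ℂ :=
  fun x y =>
    (if x j = a ∧ y j = b then (1 : ℂ) else 0) *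
      (-1 : ℂ) ^ ((par n N a + par n N b) *
        ∑ l ∈ Finset.univ.filter (fun l : Fin k => l < j), par n N (x l)) *
      ∏ l ∈ Finset.univ.filter (fun l : Fin k => l ≠ j),
        (if x l = y l then (1 : ℂ) else 0)

/-- `E_{ab} = ∑_{j=1}^k e^{(j)}_{ab}`. -/
noncomputable def Egen (n N k : ℕ) (a b : Fin N) : Matrix (Fin k → Fin N) (Fin k → Fin N) ℂ :=
  ∑ j : Fin k, eop n N k j a b

/-- The graded permutation `P_{ij} = ∑_{a,b} (−1)^{p(b)} e^{(i)}_{ab} e^{(j)}_{ba}`. -/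
noncomputable def Pg (n N k : ℕ) (i j : Fin k) : Matrix (Fin k → Fin N) (Fin k → Fin N) ℂ :=
  ∑ a : Fin N, ∑ b : Fin N,
    ((-1 : ℂ) ^ par n N b) • (eop n N k i a b * eop n N k j b a)

/-- Commutator. -/
def comm {α : Type*} [Ring α] (X Y : α) : α := X * Y - Y * X

/-- Anticommutator. -/
def acomm {α : Type*} [Ring α] (X Y : α) : α := X * Y + Y * X

/-- The dynamical connection matrix
`A_a = ∑_j z_j e^{(j)}_{aa} + ∑_{b ≠ a} (−1)^{p(b)} (E_{ab}E_{ba} − E_{aa})/(λ_a − λ_b)`. -/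
noncomputable def dynA (n N k : ℕ) (z : Fin k → ℂ) (lam : Fin N → ℂ) (a : Fin N) :
    Matrix (Fin k → Fin N) (Fin k → Fin N) ℂ :=
  (∑ j : Fin k, z j • eop n N k j a a) +
    ∑ b ∈ Finset.univ.filter (fun b : Fin N => b ≠ a),
      (((-1 : ℂ) ^ par n N b) / (lam a - lam b)) •
        (Egen n N k a b * Egen n N k b a - Egen n N k a a)

/-- The (twisted) KZ connection matrix
`B_i = ∑_c λ_c e^{(i)}_{cc} + ∑_{j ≠ i} P_{ij}/(z_i − z_j)`. -/
noncomputable def kzB (n N k : ℕ) (z : Fin k → ℂ) (lam : Fin N → ℂ) (i : Fin k) :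
    Matrix (Fin k → Fin N) (Fin k → Fin N) ℂ :=
  (∑ c : Fin N, lam c • eop n N k i c c) +
    ∑ j ∈ Finset.univ.filter (fun j : Fin k => j ≠ i),
      ((z i - z j)⁻¹) • Pg n N k i j

/-- Adjacent graded permutation `P_{s_l} = P_{l,l+1}` (0-based slots). -/
noncomputable def Ps (n N k : ℕ) (l : ℕ) (h : l + 1 < k) :
    Matrix (Fin k → Fin N) (Fin k → Fin N) ℂ :=
  Pg n N k ⟨l, Nat.lt_of_succ_lt h⟩ ⟨l + 1, h⟩

/-- The highest-configuration vector `e_1 ⊗ ⋯ ⊗ e_N ∈ (ℂ^N)^{⊗N}`. -/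
noncomputable def baseVec (N : ℕ) : (Fin N → Fin N) → ℂ :=
  fun x => if x = (fun j => j) then 1 else 0

/-- `Ω^i = ∑_{σ ∈ S_N} (−1)^{i·ℓ(σ)} P_σ (e_1 ⊗ ⋯ ⊗ e_N)`, where `P_σ = ρ σ` for the
(unique) multiplicative extension `ρ` of the adjacent graded permutations. -/
noncomputable def OmegaVec (N : ℕ) (i : ℕ)
    (ρ : Equiv.Perm (Fin N) →* Matrix (Fin N → Fin N) (Fin N → Fin N) ℂ) :
    (Fin N → Fin N) → ℂ :=
  ∑ σ : Equiv.Perm (Fin N),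
    (((Equiv.Perm.sign σ : ℤ) : ℂ) ^ i) • Matrix.mulVec (ρ σ) (baseVec N)

/-- The set of `(z, λ)` with pairwise distinct `z`'s and pairwise distinct `λ`'s. -/
def Usep (N : ℕ) : Set ((Fin N → ℂ) × (Fin N → ℂ)) :=
  {p | (∀ i j : Fin N, i ≠ j → p.1 i ≠ p.1 j) ∧ (∀ a b : Fin N, a ≠ b → p.2 a ≠ p.2 b)}

end Glnm

namespace Glnm

/-- partial parity sum -/
def Spp (n N : ℕ) {k : ℕ} (x : Fin k → Fin N) (j : Fin k) : ℕ :=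
  ∑ l ∈ Finset.univ.filter (fun l : Fin k => l < j), par n N (x l)

variable {n N k : ℕ}

lemma eop_apply (j : Fin k) (a b : Fin N) (x y : Fin k → Fin N) :
    eop n N k j a b x y =
      if x j = a ∧ y = Function.update x j b then
        (-1 : ℂ) ^ ((par n N a + par n N b) * Spp n N x j) else 0 := by
  unfold eop Spp
  rcases em (x j = a ∧ y = Function.update x j b) with ⟨h1, h2⟩ | h
  · subst h2
    rw [if_pos ⟨h1, Function.update_self _ _ _⟩, if_pos ⟨h1, rfl⟩]
    rw [Finset.prod_eq_one, mul_one, one_mul]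
    intro l hl
    rw [Function.update_of_ne (Finset.mem_filter.mp hl).2, if_pos rfl]
  · rw [if_neg h]
    by_cases h1 : x j = a
    · by_cases h2 : y j = b
      · -- then y ≠ update x j b, so some l ≠ j with y l ≠ x l
        have h3 : y ≠ Function.update x j b := fun hy => h ⟨h1, hy⟩
        rw [Function.ne_iff] at h3
        obtain ⟨l, hl⟩ := h3
        have hlj : l ≠ j := by
          intro hlj; subst hlj; rw [Function.update_self] at hl; exact hl h2
        rw [Function.update_of_ne hlj] at hl
        rw [Finset.prod_eq_zero (i := l) (by simp [hlj]) (by simp [Ne.symm hl])]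
        ring
      · rw [if_neg (fun hh => h2 hh.2)]; ring
    · rw [if_neg (fun hh => h1 hh.1)]; ring

end Glnm

namespace Glnm

lemma neg_one_pow_add_two_mul (u w : ℕ) : (-1 : ℂ) ^ (u + 2 * w) = (-1) ^ u := by
  rw [pow_add, pow_mul]; norm_num

lemma pow_aux (pa pb pd S : ℕ) :
    (-1 : ℂ) ^ ((pa + pb + (pb + pd)) * S) = (-1) ^ ((pa + pd) * S) := by
  have h : (pa + pb + (pb + pd)) * S = (pa + pd) * S + 2 * (pb * S) := by ring
  rw [h, neg_one_pow_add_two_mul]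

lemma eop_mul_same (j : Fin k) (a b c d : Fin N) :
    eop n N k j a b * eop n N k j c d = if b = c then eop n N k j a d else 0 := by
  ext x y
  rw [Matrix.mul_apply]
  simp only [eop_apply]
  have hcollapse : ∀ z : Fin k → Fin N,
      (if x j = a ∧ z = Function.update x j b then
        (-1 : ℂ) ^ ((par n N a + par n N b) * Spp n N x j) else 0) *
      (if z j = c ∧ y = Function.update z j d then
        (-1 : ℂ) ^ ((par n N c + par n N d) * Spp n N z j) else 0) =
      if z = Function.update x j b then
        (if x j = a then (-1 : ℂ) ^ ((par n N a + par n N b) * Spp n N x j) else 0) *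
        (if z j = c ∧ y = Function.update z j d then
          (-1 : ℂ) ^ ((par n N c + par n N d) * Spp n N z j) else 0)
      else 0 := by
    intro z
    by_cases hz : z = Function.update x j b <;> by_cases hxa : x j = a <;>
      simp [hz, hxa]
  rw [Finset.sum_congr rfl (fun z _ => hcollapse z), Finset.sum_ite_eq' Finset.univ]
  rw [if_pos (Finset.mem_univ _)]
  set u := Function.update x j b with hu
  have huj : u j = b := Function.update_self _ _ _
  have hSu : Spp n N u j = Spp n N x j := by
    unfold Spp
    refine Finset.sum_congr rfl (fun l hl => ?_)
    have hlj : l ≠ j := ne_of_lt (Finset.mem_filter.mp hl).2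
    rw [hu, Function.update_of_ne hlj]
  have huu : Function.update u j d = Function.update x j d := by
    rw [hu, Function.update_idem]
  by_cases hbc : b = c
  · subst hbc
    rw [if_pos rfl, eop_apply]
    by_cases hxa : x j = a
    · by_cases hy : y = Function.update x j d
      · rw [if_pos hxa,
          if_pos (show u j = b ∧ y = Function.update u j d from ⟨huj, by rw [huu]; exact hy⟩),
          if_pos (show x j = a ∧ y = Function.update x j d from ⟨hxa, hy⟩),
          hSu, ← pow_add, ← add_mul, pow_aux]
      · rw [if_neg (show ¬(u j = b ∧ y = Function.update u j d) from
            fun hh => hy (by rw [← huu]; exact hh.2)), mul_zero,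
          if_neg (show ¬(x j = a ∧ y = Function.update x j d) from fun hh => hy hh.2)]
    · rw [if_neg hxa, zero_mul,
        if_neg (show ¬(x j = a ∧ y = Function.update x j d) from fun hh => hxa hh.1)]
  · rw [if_neg hbc]
    rw [if_neg (show ¬(u j = c ∧ y = Function.update u j d) from
        fun hh => hbc (huj ▸ hh.1)), mul_zero, Matrix.zero_apply]

end Glnm

namespace Glnm

variable {n N k : ℕ}

lemma eop_mul_apply (p q : Fin k) (a b c d : Fin N) (x y : Fin k → Fin N) :
    (eop n N k p a b * eop n N k q c d) x y =
      (if x p = a then (-1 : ℂ) ^ ((par n N a + par n N b) * Spp n N x p) else 0) *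
      (if Function.update x p b q = c ∧
          y = Function.update (Function.update x p b) q d then
        (-1 : ℂ) ^ ((par n N c + par n N d) * Spp n N (Function.update x p b) q) else 0) := by
  rw [Matrix.mul_apply]
  simp only [eop_apply]
  set u := Function.update x p b with hu
  have hcollapse : ∀ z : Fin k → Fin N,
      (if x p = a ∧ z = u then (-1 : ℂ) ^ ((par n N a + par n N b) * Spp n N x p) else 0) *
      (if z q = c ∧ y = Function.update z q d then
        (-1 : ℂ) ^ ((par n N c + par n N d) * Spp n N z q) else 0) =
      if z = u then
        (if x p = a then (-1 : ℂ) ^ ((par n N a + par n N b) * Spp n N x p) else 0) *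
        (if u q = c ∧ y = Function.update u q d then
          (-1 : ℂ) ^ ((par n N c + par n N d) * Spp n N u q) else 0)
      else 0 := by
    intro z
    by_cases hz : z = u <;> by_cases h1 : x p = a <;> simp [hz, h1]
  rw [Finset.sum_congr rfl fun z _ => hcollapse z, Finset.sum_ite_eq' Finset.univ,
    if_pos (Finset.mem_univ _)]

lemma pow_aux2 (K M Si Su Sj pa pb : ℕ) (h : Su + pa = Sj + pb) :
    (-1 : ℂ) ^ ((pa + pb) * Si + M * Su) =
      (-1) ^ ((pa + pb) * M + (M * Sj + (pa + pb) * Si)) := by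
  have h2 : M * Su + M * pa = M * Sj + M * pb := by rw [← mul_add, ← mul_add, h]
  have h3 : (pa + pb) * M + (M * Sj + (pa + pb) * Si) =
      ((pa + pb) * Si + M * Su) + 2 * (M * pa) := by nlinarith [h2]
  rw [h3, neg_one_pow_add_two_mul]

lemma Spp_update_lt {x : Fin k → Fin N} {i j : Fin k} (hij : i < j) (b : Fin N) :
    Spp n N (Function.update x i b) j + par n N (x i) = Spp n N x j + par n N b := by
  classical
  unfold Spp
  have hi : i ∈ Finset.univ.filter (fun l : Fin k => l < j) := by simp [hij]
  rw [← Finset.sum_erase_add _ _ hi, ← Finset.sum_erase_add _ _ hi]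
  have he : ∀ l ∈ (Finset.univ.filter (fun l : Fin k => l < j)).erase i,
      par n N (Function.update x i b l) = par n N (x l) := by
    intro l hl
    rw [Function.update_of_ne (Finset.mem_erase.mp hl).1]
  rw [Finset.sum_congr rfl he, Function.update_self]
  ring

lemma Spp_update_gt {x : Fin k → Fin N} {i j : Fin k} (hij : i < j) (d : Fin N) :
    Spp n N (Function.update x j d) i = Spp n N x i := by
  unfold Spp
  refine Finset.sum_congr rfl (fun l hl => ?_)
  have : l ≠ j := ne_of_lt (lt_trans (Finset.mem_filter.mp hl).2 hij)
  rw [Function.update_of_ne this]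

lemma eop_mul_cross_lt {i j : Fin k} (hij : i < j) (a b c d : Fin N) :
    eop n N k i a b * eop n N k j c d =
      ((-1 : ℂ) ^ ((par n N a + par n N b) * (par n N c + par n N d))) •
        (eop n N k j c d * eop n N k i a b) := by
  have hijne : i ≠ j := ne_of_lt hij
  ext x y
  rw [Matrix.smul_apply, eop_mul_apply, eop_mul_apply]
  have h1 : Function.update x i b j = x j := Function.update_of_ne hijne.symm _ _
  have h2 : Function.update x j d i = x i := Function.update_of_ne hijne _ _
  have h3 : Function.update (Function.update x j d) i b =
      Function.update (Function.update x i b) j d := Function.update_comm hijne.symm d b x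
  rw [h1, h2, h3]
  by_cases hxa : x i = a
  · by_cases hxc : x j = c
    · by_cases hy : y = Function.update (Function.update x i b) j d
      · rw [if_pos hxa, if_pos hxc, if_pos ⟨hxc, hy⟩, if_pos ⟨hxa, hy⟩]
        rw [smul_eq_mul, ← pow_add, ← pow_add, ← pow_add]
        rw [Spp_update_gt hij]
        have hS : Spp n N (Function.update x i b) j + par n N a =
            Spp n N x j + par n N b := by rw [← hxa]; exact Spp_update_lt hij b
        exact pow_aux2 (par n N a + par n N b) (par n N c + par n N d)
          (Spp n N x i) (Spp n N (Function.update x i b) j) (Spp n N x j)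
          (par n N a) (par n N b) hS
      · rw [if_neg (show ¬(x j = c ∧ y = Function.update (Function.update x i b) j d) from
            fun hh => hy hh.2),
          if_neg (show ¬(x i = a ∧ y = Function.update (Function.update x i b) j d) from
            fun hh => hy hh.2), mul_zero, mul_zero, smul_zero]
    · rw [if_neg (show ¬(x j = c ∧ y = Function.update (Function.update x i b) j d) from
          fun hh => hxc hh.1), if_neg hxc, mul_zero, zero_mul, smul_zero]
  · rw [if_neg hxa,
      if_neg (show ¬(x i = a ∧ y = Function.update (Function.update x i b) j d) from
        fun hh => hxa hh.1), zero_mul, mul_zero, smul_zero]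

lemma eop_mul_cross {i j : Fin k} (hij : i ≠ j) (a b c d : Fin N) :
    eop n N k i a b * eop n N k j c d =
      ((-1 : ℂ) ^ ((par n N a + par n N b) * (par n N c + par n N d))) •
        (eop n N k j c d * eop n N k i a b) := by
  rcases lt_or_gt_of_ne hij with h | h
  · exact eop_mul_cross_lt h a b c d
  · have := eop_mul_cross_lt (n := n) h c d a b
    rw [this, smul_smul, ← pow_add, mul_comm (par n N c + par n N d)]
    have : (-1 : ℂ) ^ ((par n N a + par n N b) * (par n N c + par n N d) +
        (par n N a + par n N b) * (par n N c + par n N d)) = 1 := by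
      rw [← two_mul, pow_mul]; norm_num
    rw [this, one_smul]

end Glnm

namespace Glnm

variable {n N k : ℕ}

lemma Egen_superrel (a b c d : Fin N) :
    Egen n N k a b * Egen n N k c d -
      ((-1 : ℂ) ^ ((par n N a + par n N b) * (par n N c + par n N d))) •
        (Egen n N k c d * Egen n N k a b) =
      (if b = c then Egen n N k a d else 0) -
      ((-1 : ℂ) ^ ((par n N a + par n N b) * (par n N c + par n N d))) •
        (if d = a then Egen n N k c b else 0) := by
  classical
  set s : ℂ := (-1 : ℂ) ^ ((par n N a + par n N b) * (par n N c + par n N d)) with hs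
  have key : ∀ i j : Fin k,
      eop n N k i a b * eop n N k j c d - s • (eop n N k j c d * eop n N k i a b) =
      if i = j then
        ((if b = c then eop n N k i a d else 0) -
          s • (if d = a then eop n N k i c b else 0)) else 0 := by
    intro i j
    by_cases hij : i = j
    · subst hij
      rw [if_pos rfl, eop_mul_same, eop_mul_same]
    · rw [if_neg hij, eop_mul_cross hij, ← hs, sub_self]
  have expand : Egen n N k a b * Egen n N k c d - s • (Egen n N k c d * Egen n N k a b) =
      ∑ i : Fin k, ∑ j : Fin k,
        (eop n N k i a b * eop n N k j c d - s • (eop n N k j c d * eop n N k i a b)) := by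
    unfold Egen
    rw [Finset.sum_mul_sum, Finset.sum_mul_sum]
    rw [Finset.sum_comm (s := Finset.univ) (t := Finset.univ)
      (f := fun i j => eop n N k i c d * eop n N k j a b)]
    rw [Finset.smul_sum]
    simp_rw [Finset.smul_sum]
    rw [← Finset.sum_sub_distrib]
    refine Finset.sum_congr rfl (fun i _ => ?_)
    rw [← Finset.sum_sub_distrib]
  rw [expand]
  simp_rw [key]
  rw [Finset.sum_congr rfl (fun i (_ : i ∈ Finset.univ) =>
    Finset.sum_ite_eq Finset.univ i (fun _ =>
      (if b = c then eop n N k i a d else 0) -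
        s • (if d = a then eop n N k i c b else 0)))]
  simp only [Finset.mem_univ, if_true]
  rw [Finset.sum_sub_distrib]
  congr 1
  · by_cases hbc : b = c
    · simp only [hbc, if_true, Egen]
    · simp only [hbc, if_false, Finset.sum_const_zero]
  · rw [← Finset.smul_sum]
    congr 1
    by_cases hda : d = a
    · simp only [hda, if_true, Egen]
    · simp only [hda, if_false, Finset.sum_const_zero]

end Glnm

lemma ring_claims {R : Type*} [Ring R] (A A' B B' C C' Ha Hb Hc : R)
    (hAA' : A*A' + A'*A = Ha + Hb)
    (hBB' : B*B' + B'*B = Hb + Hc)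
    (hCC' : C*C' - C'*C = Ha - Hc)
    (hAB : A*B + B*A = C)
    (hA'B' : A'*B' + B'*A' = C')
    (hAB' : A*B' + B'*A = 0)
    (hA'B : A'*B + B*A' = 0)
    (hAC : A*C = C*A)
    (hAC' : A*C' - C'*A = -B')
    (hA'C : A'*C - C*A' = B)
    (hA'C' : A'*C' = C'*A')
    (hBC : B*C = C*B)
    (hBC' : B*C' - C'*B = A')
    (hB'C : B'*C - C*B' = -A)
    (hB'C' : B'*C' = C'*B')
    (hCHa : C*Ha - Ha*C = -C)
    (hC'Ha : C'*Ha - Ha*C' = C')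
    (hCHb : C*Hb = Hb*C)
    (hC'Hb : C'*Hb = Hb*C') :
    ((A*A')*(B*B') - (B*B')*(A*A') = (C*C')*(B*B') - (B*B')*(C*C')) ∧
    ((C*C')*(A'*A) - (A'*A)*(C*C') = -((A*A')*(B*B') - (B*B')*(A*A'))) := by
  have bB'B : B'*B = Hb + Hc - B*B' := by linear_combination (norm := noncomm_ring) hBB'
  have bAB  : A*B = C - B*A := by linear_combination (norm := noncomm_ring) hAB
  have bAB' : A*B' = -(B'*A) := by linear_combination (norm := noncomm_ring) hAB'
  have bA'B : A'*B = -(B*A') := by linear_combination (norm := noncomm_ring) hA'B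
  have bA'B' : A'*B' = C' - B'*A' := by linear_combination (norm := noncomm_ring) hA'B'
  have bA'A : A'*A = Ha + Hb - A*A' := by linear_combination (norm := noncomm_ring) hAA'
  have bCB  : C*B = B*C := hBC.symm
  have bCB' : C*B' = B'*C + A := by linear_combination (norm := noncomm_ring) -hB'C
  have bCA  : C*A = A*C := hAC.symm
  have bCA' : C*A' = A'*C - B := by linear_combination (norm := noncomm_ring) -hA'C
  have bC'B : C'*B = B*C' - A' := by linear_combination (norm := noncomm_ring) -hBC'
  have bC'B' : C'*B' = B'*C' := hB'C'.symm
  have bC'A : C'*A = A*C' + B' := by linear_combination (norm := noncomm_ring) -hAC'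
  have bC'A' : C'*A' = A'*C' := hA'C'.symm
  have bC'C : C'*C = C*C' - Ha + Hc := by linear_combination (norm := noncomm_ring) -hCC'
  have bHaC : Ha*C = C*Ha + C := by linear_combination (norm := noncomm_ring) -hCHa
  have bHaC' : Ha*C' = C'*Ha - C' := by linear_combination (norm := noncomm_ring) -hC'Ha
  have bHbC : Hb*C = C*Hb := hCHb.symm
  have bHbC' : Hb*C' = C'*Hb := hC'Hb.symm
  have pB'B : ∀ x:R, B'*(B*x) = Hb*x + Hc*x - B*(B'*x) := fun x => by
    rw [← mul_assoc, bB'B]; noncomm_ring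
  have pAB : ∀ x:R, A*(B*x) = C*x - B*(A*x) := fun x => by
    rw [← mul_assoc, bAB]; noncomm_ring
  have pAB' : ∀ x:R, A*(B'*x) = -(B'*(A*x)) := fun x => by
    rw [← mul_assoc, bAB']; noncomm_ring
  have pA'B : ∀ x:R, A'*(B*x) = -(B*(A'*x)) := fun x => by
    rw [← mul_assoc, bA'B]; noncomm_ring
  have pA'B' : ∀ x:R, A'*(B'*x) = C'*x - B'*(A'*x) := fun x => by
    rw [← mul_assoc, bA'B']; noncomm_ring
  have pA'A : ∀ x:R, A'*(A*x) = Ha*x + Hb*x - A*(A'*x) := fun x => by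
    rw [← mul_assoc, bA'A]; noncomm_ring
  have pCB : ∀ x:R, C*(B*x) = B*(C*x) := fun x => by
    rw [← mul_assoc, bCB]; noncomm_ring
  have pCB' : ∀ x:R, C*(B'*x) = B'*(C*x) + A*x := fun x => by
    rw [← mul_assoc, bCB']; noncomm_ring
  have pCA : ∀ x:R, C*(A*x) = A*(C*x) := fun x => by
    rw [← mul_assoc, bCA]; noncomm_ring
  have pCA' : ∀ x:R, C*(A'*x) = A'*(C*x) - B*x := fun x => by
    rw [← mul_assoc, bCA']; noncomm_ring
  have pC'B : ∀ x:R, C'*(B*x) = B*(C'*x) - A'*x := fun x => by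
    rw [← mul_assoc, bC'B]; noncomm_ring
  have pC'B' : ∀ x:R, C'*(B'*x) = B'*(C'*x) := fun x => by
    rw [← mul_assoc, bC'B']; noncomm_ring
  have pC'A : ∀ x:R, C'*(A*x) = A*(C'*x) + B'*x := fun x => by
    rw [← mul_assoc, bC'A]; noncomm_ring
  have pC'A' : ∀ x:R, C'*(A'*x) = A'*(C'*x) := fun x => by
    rw [← mul_assoc, bC'A']; noncomm_ring
  have pC'C : ∀ x:R, C'*(C*x) = C*(C'*x) - Ha*x + Hc*x := fun x => by
    rw [← mul_assoc, bC'C]; noncomm_ring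
  have pHaC : ∀ x:R, Ha*(C*x) = C*(Ha*x) + C*x := fun x => by
    rw [← mul_assoc, bHaC]; noncomm_ring
  have pHaC' : ∀ x:R, Ha*(C'*x) = C'*(Ha*x) - C'*x := fun x => by
    rw [← mul_assoc, bHaC']; noncomm_ring
  have pHbC : ∀ x:R, Hb*(C*x) = C*(Hb*x) := fun x => by
    rw [← mul_assoc, bHbC]; noncomm_ring
  have pHbC' : ∀ x:R, Hb*(C'*x) = C'*(Hb*x) := fun x => by
    rw [← mul_assoc, bHbC']; noncomm_ring
  constructor
  · simp only [mul_assoc, mul_add, mul_sub, mul_neg, add_mul, sub_mul, neg_mul,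
      pB'B, pAB, pAB', pA'B, pA'B', pA'A, pCB, pCB', pCA, pCA', pC'B, pC'B',
      pC'A, pC'A', pC'C, pHaC, pHaC', pHbC, pHbC',
      bB'B, bAB, bAB', bA'B, bA'B', bA'A, bCB, bCB', bCA, bCA', bC'B, bC'B',
      bC'A, bC'A', bC'C, bHaC, bHaC', bHbC, bHbC']
    noncomm_ring
  · simp only [mul_assoc, mul_add, mul_sub, mul_neg, add_mul, sub_mul, neg_mul,
      pB'B, pAB, pAB', pA'B, pA'B', pA'A, pCB, pCB', pCA, pCA', pC'B, pC'B',
      pC'A, pC'A', pC'C, pHaC, pHaC', pHbC, pHbC',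
      bB'B, bAB, bAB', bA'B, bA'B', bA'A, bCB, bCB', bCA, bCA', bC'B, bC'B',
      bC'A, bC'A', bC'C, bHaC, bHaC', bHbC, bHbC']
    noncomm_ring

lemma smul_comm_helper {R : Type*} [Ring R] [Module ℂ R]
    [SMulCommClass ℂ R R] [IsScalarTower ℂ R R] (α β : ℂ) (X Y : R) :
    (α • X) * (β • Y) - (β • Y) * (α • X) = (α * β) • (X * Y - Y * X) := by
  rw [smul_mul_assoc, mul_smul_comm, smul_mul_assoc, mul_smul_comm, smul_smul, smul_smul,
    mul_comm β α, ← smul_sub]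

open Glnm in
/-- three-index commutator identity for `p(a)=p(c)=0`, `p(b)=1`. -/
theorem triple_commutator_bfb (n m k : ℕ) (hk : 1 ≤ k)
    (a b c : Fin (n + m)) (hab : a ≠ b) (hac : a ≠ c) (hbc : b ≠ c)
    (hpa : (a : ℕ) < n) (hpc : (c : ℕ) < n) (hpb : n ≤ (b : ℕ))
    (lamA lamB lamC : ℂ) (hl1 : lamA ≠ lamB) (hl2 : lamA ≠ lamC) (hl3 : lamB ≠ lamC) :
    -comm ((lamA - lamB)⁻¹ • (Egen n (n + m) k a b * Egen n (n + m) k b a))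
        ((lamB - lamC)⁻¹ • (Egen n (n + m) k b c * Egen n (n + m) k c b)) +
      comm ((lamA - lamC)⁻¹ • (Egen n (n + m) k a c * Egen n (n + m) k c a))
        ((lamB - lamC)⁻¹ • (Egen n (n + m) k b c * Egen n (n + m) k c b)) +
      comm ((lamA - lamC)⁻¹ • (Egen n (n + m) k a c * Egen n (n + m) k c a))
        ((lamB - lamA)⁻¹ • (Egen n (n + m) k b a * Egen n (n + m) k a b)) = 0 := by
  have hpa' : par n (n+m) a = 0 := if_pos hpa
  have hpb' : par n (n+m) b = 1 := if_neg (not_lt.mpr hpb)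
  have hpc' : par n (n+m) c = 0 := if_pos hpc
  have hrel : ∀ a' b' c' d' : Fin (n+m),
      Egen n (n+m) k a' b' * Egen n (n+m) k c' d' -
        ((-1 : ℂ) ^ ((par n (n+m) a' + par n (n+m) b') * (par n (n+m) c' + par n (n+m) d'))) •
          (Egen n (n+m) k c' d' * Egen n (n+m) k a' b') =
      (if b' = c' then Egen n (n+m) k a' d' else 0) -
        ((-1 : ℂ) ^ ((par n (n+m) a' + par n (n+m) b') * (par n (n+m) c' + par n (n+m) d'))) •
          (if d' = a' then Egen n (n+m) k c' b' else 0) := fun a' b' c' d' =>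
    Egen_superrel a' b' c' d'
  have hAA' : Egen n (n+m) k a b * Egen n (n+m) k b a +
      Egen n (n+m) k b a * Egen n (n+m) k a b =
      Egen n (n+m) k a a + Egen n (n+m) k b b := by
    have h := hrel a b b a
    norm_num [hpa', hpb', hpc', hab, hac, hbc, Ne.symm hab, Ne.symm hac, Ne.symm hbc] at h
    linear_combination (norm := noncomm_ring) h
  have hBB' : Egen n (n+m) k b c * Egen n (n+m) k c b +
      Egen n (n+m) k c b * Egen n (n+m) k b c =
      Egen n (n+m) k b b + Egen n (n+m) k c c := by
    have h := hrel b c c b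
    norm_num [hpa', hpb', hpc', hab, hac, hbc, Ne.symm hab, Ne.symm hac, Ne.symm hbc] at h
    linear_combination (norm := noncomm_ring) h
  have hCC' : Egen n (n+m) k a c * Egen n (n+m) k c a -
      Egen n (n+m) k c a * Egen n (n+m) k a c =
      Egen n (n+m) k a a - Egen n (n+m) k c c := by
    have h := hrel a c c a
    norm_num [hpa', hpb', hpc', hab, hac, hbc, Ne.symm hab, Ne.symm hac, Ne.symm hbc] at h
    linear_combination (norm := noncomm_ring) h
  have hAB : Egen n (n+m) k a b * Egen n (n+m) k b c +
      Egen n (n+m) k b c * Egen n (n+m) k a b = Egen n (n+m) k a c := by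
    have h := hrel a b b c
    norm_num [hpa', hpb', hpc', hab, hac, hbc, Ne.symm hab, Ne.symm hac, Ne.symm hbc] at h
    linear_combination (norm := noncomm_ring) h
  have hA'B' : Egen n (n+m) k b a * Egen n (n+m) k c b +
      Egen n (n+m) k c b * Egen n (n+m) k b a = Egen n (n+m) k c a := by
    have h := hrel b a c b
    norm_num [hpa', hpb', hpc', hab, hac, hbc, Ne.symm hab, Ne.symm hac, Ne.symm hbc] at h
    linear_combination (norm := noncomm_ring) h
  have hAB' : Egen n (n+m) k a b * Egen n (n+m) k c b +
      Egen n (n+m) k c b * Egen n (n+m) k a b = 0 := by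
    have h := hrel a b c b
    norm_num [hpa', hpb', hpc', hab, hac, hbc, Ne.symm hab, Ne.symm hac, Ne.symm hbc] at h
    linear_combination (norm := noncomm_ring) h
  have hA'B : Egen n (n+m) k b a * Egen n (n+m) k b c +
      Egen n (n+m) k b c * Egen n (n+m) k b a = 0 := by
    have h := hrel b a b c
    norm_num [hpa', hpb', hpc', hab, hac, hbc, Ne.symm hab, Ne.symm hac, Ne.symm hbc] at h
    linear_combination (norm := noncomm_ring) h
  have hAC : Egen n (n+m) k a b * Egen n (n+m) k a c =
      Egen n (n+m) k a c * Egen n (n+m) k a b := by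
    have h := hrel a b a c
    norm_num [hpa', hpb', hpc', hab, hac, hbc, Ne.symm hab, Ne.symm hac, Ne.symm hbc] at h
    linear_combination (norm := noncomm_ring) h
  have hAC' : Egen n (n+m) k a b * Egen n (n+m) k c a -
      Egen n (n+m) k c a * Egen n (n+m) k a b = -Egen n (n+m) k c b := by
    have h := hrel a b c a
    norm_num [hpa', hpb', hpc', hab, hac, hbc, Ne.symm hab, Ne.symm hac, Ne.symm hbc] at h
    linear_combination (norm := noncomm_ring) h
  have hA'C : Egen n (n+m) k b a * Egen n (n+m) k a c -
      Egen n (n+m) k a c * Egen n (n+m) k b a = Egen n (n+m) k b c := by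
    have h := hrel b a a c
    norm_num [hpa', hpb', hpc', hab, hac, hbc, Ne.symm hab, Ne.symm hac, Ne.symm hbc] at h
    linear_combination (norm := noncomm_ring) h
  have hA'C' : Egen n (n+m) k b a * Egen n (n+m) k c a =
      Egen n (n+m) k c a * Egen n (n+m) k b a := by
    have h := hrel b a c a
    norm_num [hpa', hpb', hpc', hab, hac, hbc, Ne.symm hab, Ne.symm hac, Ne.symm hbc] at h
    linear_combination (norm := noncomm_ring) h
  have hBC : Egen n (n+m) k b c * Egen n (n+m) k a c =
      Egen n (n+m) k a c * Egen n (n+m) k b c := by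
    have h := hrel b c a c
    norm_num [hpa', hpb', hpc', hab, hac, hbc, Ne.symm hab, Ne.symm hac, Ne.symm hbc] at h
    linear_combination (norm := noncomm_ring) h
  have hBC' : Egen n (n+m) k b c * Egen n (n+m) k c a -
      Egen n (n+m) k c a * Egen n (n+m) k b c = Egen n (n+m) k b a := by
    have h := hrel b c c a
    norm_num [hpa', hpb', hpc', hab, hac, hbc, Ne.symm hab, Ne.symm hac, Ne.symm hbc] at h
    linear_combination (norm := noncomm_ring) h
  have hB'C : Egen n (n+m) k c b * Egen n (n+m) k a c -
      Egen n (n+m) k a c * Egen n (n+m) k c b = -Egen n (n+m) k a b := by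
    have h := hrel c b a c
    norm_num [hpa', hpb', hpc', hab, hac, hbc, Ne.symm hab, Ne.symm hac, Ne.symm hbc] at h
    linear_combination (norm := noncomm_ring) h
  have hB'C' : Egen n (n+m) k c b * Egen n (n+m) k c a =
      Egen n (n+m) k c a * Egen n (n+m) k c b := by
    have h := hrel c b c a
    norm_num [hpa', hpb', hpc', hab, hac, hbc, Ne.symm hab, Ne.symm hac, Ne.symm hbc] at h
    linear_combination (norm := noncomm_ring) h
  have hCHa : Egen n (n+m) k a c * Egen n (n+m) k a a -
      Egen n (n+m) k a a * Egen n (n+m) k a c = -Egen n (n+m) k a c := by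
    have h := hrel a c a a
    norm_num [hpa', hpb', hpc', hab, hac, hbc, Ne.symm hab, Ne.symm hac, Ne.symm hbc] at h
    linear_combination (norm := noncomm_ring) h
  have hC'Ha : Egen n (n+m) k c a * Egen n (n+m) k a a -
      Egen n (n+m) k a a * Egen n (n+m) k c a = Egen n (n+m) k c a := by
    have h := hrel c a a a
    norm_num [hpa', hpb', hpc', hab, hac, hbc, Ne.symm hab, Ne.symm hac, Ne.symm hbc] at h
    linear_combination (norm := noncomm_ring) h
  have hCHb : Egen n (n+m) k a c * Egen n (n+m) k b b =
      Egen n (n+m) k b b * Egen n (n+m) k a c := by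
    have h := hrel a c b b
    norm_num [hpa', hpb', hpc', hab, hac, hbc, Ne.symm hab, Ne.symm hac, Ne.symm hbc] at h
    linear_combination (norm := noncomm_ring) h
  have hC'Hb : Egen n (n+m) k c a * Egen n (n+m) k b b =
      Egen n (n+m) k b b * Egen n (n+m) k c a := by
    have h := hrel c a b b
    norm_num [hpa', hpb', hpc', hab, hac, hbc, Ne.symm hab, Ne.symm hac, Ne.symm hbc] at h
    linear_combination (norm := noncomm_ring) h
  obtain ⟨hI, hII⟩ := ring_claims (Egen n (n+m) k a b) (Egen n (n+m) k b a)
    (Egen n (n+m) k b c) (Egen n (n+m) k c b) (Egen n (n+m) k a c) (Egen n (n+m) k c a)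
    (Egen n (n+m) k a a) (Egen n (n+m) k b b) (Egen n (n+m) k c c)
    hAA' hBB' hCC' hAB hA'B' hAB' hA'B hAC hAC' hA'C hA'C' hBC hBC' hB'C hB'C'
    hCHa hC'Ha hCHb hC'Hb
  simp only [Glnm.comm]
  rw [smul_comm_helper, smul_comm_helper, smul_comm_helper]
  rw [← hI, hII, smul_neg, ← neg_smul, ← neg_smul, ← add_smul, ← add_smul]
  have d1 : lamA - lamB ≠ 0 := sub_ne_zero.mpr hl1
  have d2 : lamA - lamC ≠ 0 := sub_ne_zero.mpr hl2
  have d3 : lamB - lamC ≠ 0 := sub_ne_zero.mpr hl3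
  have d4 : lamB - lamA ≠ 0 := sub_ne_zero.mpr (Ne.symm hl1)
  have hcoef : -((lamA - lamB)⁻¹ * (lamB - lamC)⁻¹) + (lamA - lamC)⁻¹ * (lamB - lamC)⁻¹ +
      -((lamA - lamC)⁻¹ * (lamB - lamA)⁻¹) = 0 := by
    field_simp
    ring
  rw [hcoef, zero_smul]
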